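/- Let a < b, n0, n1, n2 ∈ ℕ, set n = n0+n1+n2, and let B ∈ ℝ^{(n1+2n2)×(2n1+4n2)} be such that BT is invertible. Let A0 : [a,b] → ℝ^{n×n}, A1 : [a,b] → ℝ^{n×(n1+n2)}, A2 : [a,b] → ℝ^{n×n2} be bounded measurable. Define H0(s) = A0(s)G0(s) + A1(s)G3(s) + A20(s), where A20(s) = [0, 0, A2(s)] ∈ ℝ^{n×n} (block columns of widths n0, n1, n2); H1(s,θ) = A0(s)G1(s,θ) + A1(s)G4(s,θ); H2(s,θ) = A0(s)G2(s,θ) + A1(s)G5(s,θ). Then for every x = (x0,x1,x2) ∈ X with fundamental state x̂ = (x0, x1', x2''), and for almost every s ∈ [a,b]: A0(s)·(x0(s),x1(s),x2(s)) + A1(s)·(x1'(s),x2'(s)) + A2(s)·x2''(s) = H0(s) x̂(s) + ∫ₐˢ H1(s,θ) x̂(θ) dθ + ∫ₛᵇ H2(s,θ) x̂(θ) dθ; that is, the PDE generator applied to x equals the 3-PI operator 𝒜 = P_{H0,H1,H2} applied to the fundamental state x̂. -/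

import Mathlib

/-!
Let x̂ = (x0, x1', x2'') and x_bc = (x1(a), x2(a), x2'(a)). The fundamental theorem of calculus
and Taylor's formula with integral remainder (Fubini on a triangle) give
x_bf = T x_bc + ∫ₐᵇ Q(θ) x̂(θ) dθ, so the boundary condition B x_bf = 0 and the invertibility of
BT recover x_bc = -(BT)⁻¹ B ∫ₐᵇ Q x̂. Substituted into the same expansions, this shows x = 𝒯 x̂ and
(x1', x2') = ℋ x̂ on [a,b]. Finally Hᵢ = A0 Gᵢ + A1 Gᵢ₊₃, plus the multiplier A20 in H0, which only
sees x2''; hence 𝒜 x̂ = A0 𝒯 x̂ + A1 ℋ x̂ + A2 x2''.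
-/

open MeasureTheory Set Matrix ENNReal

noncomputable section

/-- Boundary-full index: blocks for x1(a), x1(b), x2(a), x2(b), x2'(a), x2'(b). -/
abbrev BfI (n1 n2 : ℕ) : Type := Fin n1 ⊕ Fin n1 ⊕ Fin n2 ⊕ Fin n2 ⊕ Fin n2 ⊕ Fin n2
/-- Boundary-core index: blocks for x1(a), x2(a), x2'(a). -/
abbrev BcI (n1 n2 : ℕ) : Type := Fin n1 ⊕ Fin n2 ⊕ Fin n2
/-- State index: blocks for the (x0, x1, x2) components. -/
abbrev StI (n0 n1 n2 : ℕ) : Type := Fin n0 ⊕ Fin n1 ⊕ Fin n2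
/-- First-derivative index: blocks for (x1', x2'). -/
abbrev D1I (n1 n2 : ℕ) : Type := Fin n1 ⊕ Fin n2

/-- The matrix T with block rows [I,0,0],[I,0,0],[0,I,0],[0,I,(b-a)I],[0,0,I],[0,0,I]. -/
def Tmat (n1 n2 : ℕ) (a b : ℝ) : Matrix (BfI n1 n2) (BcI n1 n2) ℝ :=
  Matrix.of fun r c =>
    match r, c with
    | .inl i, .inl j => if i = j then 1 else 0
    | .inr (.inl i), .inl j => if i = j then 1 else 0
    | .inr (.inr (.inl i)), .inr (.inl j) => if i = j then 1 else 0
    | .inr (.inr (.inr (.inl i))), .inr (.inl j) => if i = j then 1 else 0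
    | .inr (.inr (.inr (.inl i))), .inr (.inr j) => if i = j then b - a else 0
    | .inr (.inr (.inr (.inr (.inl i)))), .inr (.inr j) => if i = j then 1 else 0
    | .inr (.inr (.inr (.inr (.inr i)))), .inr (.inr j) => if i = j then 1 else 0
    | _, _ => 0

/-- Q(θ) with block rows [0,0,0],[0,I,0],[0,0,0],[0,0,(b-θ)I],[0,0,0],[0,0,I]. -/
def Qmat (n0 n1 n2 : ℕ) (b θ : ℝ) : Matrix (BfI n1 n2) (StI n0 n1 n2) ℝ :=
  Matrix.of fun r c =>
    match r, c with
    | .inr (.inl i), .inr (.inl j) => if i = j then 1 else 0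
    | .inr (.inr (.inr (.inl i))), .inr (.inr j) => if i = j then b - θ else 0
    | .inr (.inr (.inr (.inr (.inr i)))), .inr (.inr j) => if i = j then 1 else 0
    | _, _ => 0

/-- K(s) with block rows [0,0,0],[I,0,0],[0,I,(s-a)I]. -/
def Kmat (n0 n1 n2 : ℕ) (a s : ℝ) : Matrix (StI n0 n1 n2) (BcI n1 n2) ℝ :=
  Matrix.of fun r c =>
    match r, c with
    | .inr (.inl i), .inl j => if i = j then 1 else 0
    | .inr (.inr i), .inr (.inl j) => if i = j then 1 else 0
    | .inr (.inr i), .inr (.inr j) => if i = j then s - a else 0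
    | _, _ => 0

/-- V = [[0,0,0],[0,0,I]]. -/
def Vmat (n1 n2 : ℕ) : Matrix (D1I n1 n2) (BcI n1 n2) ℝ :=
  Matrix.of fun r c =>
    match r, c with
    | .inr i, .inr (.inr j) => if i = j then 1 else 0
    | _, _ => 0

/-- G0 = [[I,0,0],[0,0,0],[0,0,0]]. -/
def G0mat (n0 n1 n2 : ℕ) : Matrix (StI n0 n1 n2) (StI n0 n1 n2) ℝ :=
  Matrix.of fun r c =>
    match r, c with
    | .inl i, .inl j => if i = j then 1 else 0
    | _, _ => 0

/-- L1(s,θ) = [[0,0,0],[0,I,0],[0,0,(s-θ)I]]. -/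
def L1mat (n0 n1 n2 : ℕ) (s θ : ℝ) : Matrix (StI n0 n1 n2) (StI n0 n1 n2) ℝ :=
  Matrix.of fun r c =>
    match r, c with
    | .inr (.inl i), .inr (.inl j) => if i = j then 1 else 0
    | .inr (.inr i), .inr (.inr j) => if i = j then s - θ else 0
    | _, _ => 0

/-- G3 = [[0,I,0],[0,0,0]]. -/
def G3mat (n0 n1 n2 : ℕ) : Matrix (D1I n1 n2) (StI n0 n1 n2) ℝ :=
  Matrix.of fun r c =>
    match r, c with
    | .inl i, .inr (.inl j) => if i = j then 1 else 0
    | _, _ => 0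

/-- L4 = [[0,0,0],[0,0,I]]. -/
def L4mat (n0 n1 n2 : ℕ) : Matrix (D1I n1 n2) (StI n0 n1 n2) ℝ :=
  Matrix.of fun r c =>
    match r, c with
    | .inr i, .inr (.inr j) => if i = j then 1 else 0
    | _, _ => 0

/-- G2(s,θ) = -K(s) (BT)⁻¹ B Q(θ). -/
def G2fun (n0 n1 n2 : ℕ) (a b : ℝ) (B : Matrix (BcI n1 n2) (BfI n1 n2) ℝ) (s θ : ℝ) :
    Matrix (StI n0 n1 n2) (StI n0 n1 n2) ℝ :=
  -(Kmat n0 n1 n2 a s * ((B * Tmat n1 n2 a b)⁻¹ * (B * Qmat n0 n1 n2 b θ)))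

/-- G1(s,θ) = L1(s,θ) + G2(s,θ). -/
def G1fun (n0 n1 n2 : ℕ) (a b : ℝ) (B : Matrix (BcI n1 n2) (BfI n1 n2) ℝ) (s θ : ℝ) :
    Matrix (StI n0 n1 n2) (StI n0 n1 n2) ℝ :=
  L1mat n0 n1 n2 s θ + G2fun n0 n1 n2 a b B s θ

/-- G5(s,θ) = -V (BT)⁻¹ B Q(θ). -/
def G5fun (n0 n1 n2 : ℕ) (a b : ℝ) (B : Matrix (BcI n1 n2) (BfI n1 n2) ℝ) (_s θ : ℝ) :
    Matrix (D1I n1 n2) (StI n0 n1 n2) ℝ :=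
  -(Vmat n1 n2 * ((B * Tmat n1 n2 a b)⁻¹ * (B * Qmat n0 n1 n2 b θ)))

/-- G4(s,θ) = L4 + G5(s,θ). -/
def G4fun (n0 n1 n2 : ℕ) (a b : ℝ) (B : Matrix (BcI n1 n2) (BfI n1 n2) ℝ) (s θ : ℝ) :
    Matrix (D1I n1 n2) (StI n0 n1 n2) ℝ :=
  L4mat n0 n1 n2 + G5fun n0 n1 n2 a b B s θ

/-- The 3-PI (partial integral) operator with multiplier M0 and kernels M1 (below
the diagonal) and M2 (above the diagonal) on the interval [a,b]. -/
def PIop {ι κ : Type*} [Fintype ι] [Fintype κ] (a b : ℝ)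
    (M0 : ℝ → Matrix κ ι ℝ) (M1 M2 : ℝ → ℝ → Matrix κ ι ℝ)
    (x : ℝ → ι → ℝ) : ℝ → κ → ℝ := fun s =>
  (M0 s).mulVec (x s) + (∫ θ in a..s, (M1 s θ).mulVec (x θ)) +
    ∫ θ in s..b, (M2 s θ).mulVec (x θ)

/-- The unitary operator 𝒯 = P_{G0,G1,G2}. -/
def Tcal (n0 n1 n2 : ℕ) (a b : ℝ) (B : Matrix (BcI n1 n2) (BfI n1 n2) ℝ)
    (x : ℝ → StI n0 n1 n2 → ℝ) : ℝ → StI n0 n1 n2 → ℝ :=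
  PIop a b (fun _ => G0mat n0 n1 n2) (G1fun n0 n1 n2 a b B) (G2fun n0 n1 n2 a b B) x

/-- The operator ℋ = P_{G3,G4,G5}. -/
def Hcal (n0 n1 n2 : ℕ) (a b : ℝ) (B : Matrix (BcI n1 n2) (BfI n1 n2) ℝ)
    (x : ℝ → StI n0 n1 n2 → ℝ) : ℝ → D1I n1 n2 → ℝ :=
  PIop a b (fun _ => G3mat n0 n1 n2) (G4fun n0 n1 n2 a b B) (G5fun n0 n1 n2 a b B) x

/-- Stacking three component functions into a single state function. -/
def stack3 {n0 n1 n2 : ℕ} (x0 : ℝ → Fin n0 → ℝ) (x1 : ℝ → Fin n1 → ℝ)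
    (x2 : ℝ → Fin n2 → ℝ) : ℝ → StI n0 n1 n2 → ℝ :=
  fun s => Sum.elim (x0 s) (Sum.elim (x1 s) (x2 s))

/-- The vector of full boundary values (x1(a), x1(b), x2(a), x2(b), x2'(a), x2'(b)). -/
def bfvec {n1 n2 : ℕ} (x1 : ℝ → Fin n1 → ℝ) (x2 x2' : ℝ → Fin n2 → ℝ) (a b : ℝ) :
    BfI n1 n2 → ℝ :=
  Sum.elim (x1 a) (Sum.elim (x1 b) (Sum.elim (x2 a) (Sum.elim (x2 b)
    (Sum.elim (x2' a) (x2' b)))))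

/-- x1 is of Sobolev class H¹ on [a,b] with derivative x1' ∈ L². -/
def IsH1 (a b : ℝ) {n : ℕ} (x1 x1' : ℝ → Fin n → ℝ) : Prop :=
  MemLp x1' 2 (volume.restrict (Icc a b)) ∧
    ∀ s ∈ Icc a b, x1 s = x1 a + ∫ η in a..s, x1' η

/-- x2 is of Sobolev class H² on [a,b] with first derivative x2' and second
derivative x2'' ∈ L². -/
def IsH2 (a b : ℝ) {n : ℕ} (x2 x2' x2'' : ℝ → Fin n → ℝ) : Prop :=
  (∀ s ∈ Icc a b, x2 s = x2 a + ∫ η in a..s, x2' η) ∧ IsH1 a b x2' x2''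

/-- Membership of (x0,x1,x2) (with derivative data x1', x2', x2'') in the space X. -/
def InX (a b : ℝ) {n0 n1 n2 : ℕ} (B : Matrix (BcI n1 n2) (BfI n1 n2) ℝ)
    (x0 : ℝ → Fin n0 → ℝ) (x1 x1' : ℝ → Fin n1 → ℝ) (x2 x2' x2'' : ℝ → Fin n2 → ℝ) : Prop :=
  MemLp x0 2 (volume.restrict (Icc a b)) ∧ IsH1 a b x1 x1' ∧ IsH2 a b x2 x2' x2'' ∧
    B.mulVec (bfvec x1 x2 x2' a b) = 0

/-- The L² inner product on [a,b]. -/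
def L2inner {n : ℕ} (a b : ℝ) (u v : ℝ → Fin n → ℝ) : ℝ :=
  ∫ s in a..b, u s ⬝ᵥ v s

/-- The L² inner product on [a,b] for state-indexed functions. -/
def L2innerSt {n0 n1 n2 : ℕ} (a b : ℝ) (u v : ℝ → StI n0 n1 n2 → ℝ) : ℝ :=
  ∫ s in a..b, u s ⬝ᵥ v s

/-- A20(s) = [0, 0, A2(s)] (block columns of widths n0, n1, n2). -/
def A20fun {n0 n1 n2 : ℕ} (A2 : ℝ → Matrix (StI n0 n1 n2) (Fin n2) ℝ) (s : ℝ) :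
    Matrix (StI n0 n1 n2) (StI n0 n1 n2) ℝ :=
  Matrix.of fun r c =>
    match c with
    | .inr (.inr j) => A2 s r j
    | _ => 0

/-- H0(s) = A0(s)G0(s) + A1(s)G3(s) + A20(s). -/
def H0fun (n0 n1 n2 : ℕ)
    (A0 : ℝ → Matrix (StI n0 n1 n2) (StI n0 n1 n2) ℝ)
    (A1 : ℝ → Matrix (StI n0 n1 n2) (D1I n1 n2) ℝ)
    (A2 : ℝ → Matrix (StI n0 n1 n2) (Fin n2) ℝ) (s : ℝ) :
    Matrix (StI n0 n1 n2) (StI n0 n1 n2) ℝ :=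
  A0 s * G0mat n0 n1 n2 + A1 s * G3mat n0 n1 n2 + A20fun A2 s

/-- H1(s,θ) = A0(s)G1(s,θ) + A1(s)G4(s,θ). -/
def H1fun (n0 n1 n2 : ℕ) (a b : ℝ) (B : Matrix (BcI n1 n2) (BfI n1 n2) ℝ)
    (A0 : ℝ → Matrix (StI n0 n1 n2) (StI n0 n1 n2) ℝ)
    (A1 : ℝ → Matrix (StI n0 n1 n2) (D1I n1 n2) ℝ) (s θ : ℝ) :
    Matrix (StI n0 n1 n2) (StI n0 n1 n2) ℝ :=
  A0 s * G1fun n0 n1 n2 a b B s θ + A1 s * G4fun n0 n1 n2 a b B s θ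

/-- H2(s,θ) = A0(s)G2(s,θ) + A1(s)G5(s,θ). -/
def H2fun (n0 n1 n2 : ℕ) (a b : ℝ) (B : Matrix (BcI n1 n2) (BfI n1 n2) ℝ)
    (A0 : ℝ → Matrix (StI n0 n1 n2) (StI n0 n1 n2) ℝ)
    (A1 : ℝ → Matrix (StI n0 n1 n2) (D1I n1 n2) ℝ) (s θ : ℝ) :
    Matrix (StI n0 n1 n2) (StI n0 n1 n2) ℝ :=
  A0 s * G2fun n0 n1 n2 a b B s θ + A1 s * G5fun n0 n1 n2 a b B s θ

/-- The operator 𝒜 = P_{H0,H1,H2}. -/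
def Acal (n0 n1 n2 : ℕ) (a b : ℝ) (B : Matrix (BcI n1 n2) (BfI n1 n2) ℝ)
    (A0 : ℝ → Matrix (StI n0 n1 n2) (StI n0 n1 n2) ℝ)
    (A1 : ℝ → Matrix (StI n0 n1 n2) (D1I n1 n2) ℝ)
    (A2 : ℝ → Matrix (StI n0 n1 n2) (Fin n2) ℝ)
    (x : ℝ → StI n0 n1 n2 → ℝ) : ℝ → StI n0 n1 n2 → ℝ :=
  PIop a b (H0fun n0 n1 n2 A0 A1 A2) (H1fun n0 n1 n2 a b B A0 A1)
    (H2fun n0 n1 n2 a b B A0 A1) x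

section Integration

variable {ι κ : Type*} [Fintype ι] [Fintype κ] {μ : Measure ℝ} {c d : ℝ}

theorem intervalIntegral_apply {E : ι → Type*} [∀ i, NormedAddCommGroup (E i)]
    [∀ i, NormedSpace ℝ (E i)] [∀ i, CompleteSpace (E i)] {f : ℝ → Π i, E i}
    (hf : IntervalIntegrable f μ c d) (i : ι) :
    (∫ θ in c..d, f θ ∂μ) i = ∫ θ in c..d, f θ i ∂μ :=
  ((ContinuousLinearMap.proj (R := ℝ) i).intervalIntegral_comp_comm hf).symm

theorem Matrix.mulVec_intervalIntegral (M : Matrix κ ι ℝ) {x : ℝ → ι → ℝ}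
    (hx : IntervalIntegrable x μ c d) :
    M *ᵥ (∫ θ in c..d, x θ ∂μ) = ∫ θ in c..d, M *ᵥ x θ ∂μ :=
  ((LinearMap.toContinuousLinearMap M.mulVecLin).intervalIntegral_comp_comm hx).symm

theorem IntervalIntegrable.continuousOn_mulVec [IsLocallyFiniteMeasure μ]
    {M : ℝ → Matrix κ ι ℝ} {x : ℝ → ι → ℝ}
    (hx : IntervalIntegrable x μ c d) (hM : ContinuousOn M (uIcc c d)) :
    IntervalIntegrable (fun θ => M θ *ᵥ x θ) μ c d := by
  rw [intervalIntegrable_iff] at hx ⊢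
  refine Integrable.of_eval fun i => ?_
  refine integrable_finsetSum _ fun j _ => ?_
  have hMij : ContinuousOn (fun θ => M θ i j) (uIcc c d) :=
    continuousOn_pi.1 (continuousOn_pi.1 hM i) j
  exact IntegrableOn.continuousOn_mul_of_subset (hg' := hx.eval j) hMij isCompact_uIcc
    measurableSet_uIoc uIoc_subset_uIcc

theorem integral_integral_eq_integral_sub_smul {E : Type*} [NormedAddCommGroup E] [NormedSpace ℝ E]
    [CompleteSpace E] {a s : ℝ} (has : a ≤ s) {g : ℝ → E} (hg : IntegrableOn g (Ioc a s)) :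
    ∫ η in a..s, ∫ θ in a..η, g θ = ∫ θ in a..s, (s - θ) • g θ := by
  set F : ℝ → ℝ → E := fun η θ => (Iic η).indicator g θ
  have hF : IntegrableOn (Function.uncurry F) (uIoc a s ×ˢ uIoc a s) := by
    rw [uIoc_of_le has, IntegrableOn, Measure.volume_eq_prod, ← Measure.prod_restrict]
    have : Integrable (fun p : ℝ × ℝ => g p.2)
        ((volume.restrict (Ioc a s)).prod (volume.restrict (Ioc a s))) := by
      simpa using (integrable_const (1 : ℝ)).smul_prod hg
    exact this.indicator (measurableSet_le measurable_snd measurable_fst)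
  calc ∫ η in a..s, ∫ θ in a..η, g θ = ∫ η in a..s, ∫ θ in a..s, F η θ := by
        refine intervalIntegral.integral_congr fun η hη => ?_
        rw [uIcc_of_le has] at hη
        rw [intervalIntegral.integral_of_le has, integral_indicator measurableSet_Iic,
          Measure.restrict_restrict measurableSet_Iic, Iic_inter_Ioc_of_le hη.2,
          intervalIntegral.integral_of_le hη.1]
    _ = ∫ θ in a..s, ∫ η in a..s, F η θ := intervalIntegral_intervalIntegral_swap hF
    _ = ∫ θ in a..s, (s - θ) • g θ := by
        refine intervalIntegral.integral_congr_ae (.of_forall fun θ hθ => ?_)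
        rw [uIoc_of_le has] at hθ
        have hind : ∀ η, F η θ = (Ici θ).indicator (fun _ => g θ) η := fun η => by
          by_cases h : θ ≤ η <;> simp [F, h]
        simp only [hind]
        rw [intervalIntegral.integral_of_le has, integral_indicator measurableSet_Ici,
          Measure.restrict_restrict measurableSet_Ici, setIntegral_const]
        have hset : Ici θ ∩ Ioc a s = Icc θ s := by
          ext η
          simp only [mem_inter_iff, mem_Ici, mem_Ioc, mem_Icc]
          exact ⟨fun h => ⟨h.1, h.2.2⟩, fun h => ⟨h.1, hθ.1.trans_le h.1, h.2⟩⟩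
        rw [hset, Real.volume_real_Icc_of_le hθ.2]

theorem integral_sub_smul_eq_of_integral_eq {E : Type*} [NormedAddCommGroup E]
    [NormedSpace ℝ E] [CompleteSpace E] {a s : ℝ} (has : a ≤ s) {f f' f'' : ℝ → E}
    (hf : f s = f a + ∫ θ in a..s, f' θ)
    (hf' : ∀ t ∈ Icc a s, f' t = f' a + ∫ θ in a..t, f'' θ) (hf'' : IntegrableOn f'' (Icc a s)) :
    ∫ θ in a..s, (s - θ) • f'' θ = f s - f a - (s - a) • f' a := by
  have hprim : IntervalIntegrable (fun η => ∫ θ in a..η, f'' θ) volume a s :=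
    (intervalIntegral.continuousOn_primitive_interval
      (hf''.mono_set (by rw [uIcc_of_le has]))).intervalIntegrable
  have hf'_eq : ∫ η in a..s, f' η = (s - a) • f' a + ∫ η in a..s, ∫ θ in a..η, f'' θ := by
    rw [intervalIntegral.integral_congr (g := fun η => f' a + ∫ θ in a..η, f'' θ)
      fun η hη => hf' η (by rwa [uIcc_of_le has] at hη),
      intervalIntegral.integral_add intervalIntegrable_const hprim,
      intervalIntegral.integral_const]
  rw [← integral_integral_eq_integral_sub_smul has (hf''.mono_set Ioc_subset_Icc_self), hf,
    hf'_eq]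
  abel

end Integration

section Blocks

variable {n0 n1 n2 : ℕ}

theorem Qmat_mulVec (b θ : ℝ) (u0 : Fin n0 → ℝ) (u1 : Fin n1 → ℝ) (u2 : Fin n2 → ℝ) :
    Qmat n0 n1 n2 b θ *ᵥ Sum.elim u0 (Sum.elim u1 u2) =
      Sum.elim (0 : Fin n1 → ℝ) (Sum.elim u1 (Sum.elim (0 : Fin n2 → ℝ)
        (Sum.elim ((b - θ) • u2) (Sum.elim (0 : Fin n2 → ℝ) u2)))) := by
  ext (i | i | i | i | i | i) <;> simp [Qmat, mulVec, dotProduct, Fintype.sum_sum_type]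

theorem Tmat_mulVec (a b : ℝ) (w1 : Fin n1 → ℝ) (w2 w3 : Fin n2 → ℝ) :
    Tmat n1 n2 a b *ᵥ Sum.elim w1 (Sum.elim w2 w3) =
      Sum.elim w1 (Sum.elim w1 (Sum.elim w2
        (Sum.elim (w2 + (b - a) • w3) (Sum.elim w3 w3)))) := by
  ext (i | i | i | i | i | i) <;> simp [Tmat, mulVec, dotProduct, Fintype.sum_sum_type]

theorem Kmat_mulVec (a s : ℝ) (w1 : Fin n1 → ℝ) (w2 w3 : Fin n2 → ℝ) :
    Kmat n0 n1 n2 a s *ᵥ Sum.elim w1 (Sum.elim w2 w3) =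
      Sum.elim (0 : Fin n0 → ℝ) (Sum.elim w1 (w2 + (s - a) • w3)) := by
  ext (i | i | i) <;> simp [Kmat, mulVec, dotProduct, Fintype.sum_sum_type]

theorem Vmat_mulVec (w1 : Fin n1 → ℝ) (w2 w3 : Fin n2 → ℝ) :
    Vmat n1 n2 *ᵥ Sum.elim w1 (Sum.elim w2 w3) = Sum.elim (0 : Fin n1 → ℝ) w3 := by
  ext (i | i) <;> simp [Vmat, mulVec, dotProduct, Fintype.sum_sum_type]

theorem G0mat_mulVec (u0 : Fin n0 → ℝ) (u1 : Fin n1 → ℝ) (u2 : Fin n2 → ℝ) :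
    G0mat n0 n1 n2 *ᵥ Sum.elim u0 (Sum.elim u1 u2) = Sum.elim u0 0 := by
  ext (i | i | i) <;> simp [G0mat, mulVec, dotProduct, Fintype.sum_sum_type]

theorem L1mat_mulVec (s θ : ℝ) (u0 : Fin n0 → ℝ) (u1 : Fin n1 → ℝ) (u2 : Fin n2 → ℝ) :
    L1mat n0 n1 n2 s θ *ᵥ Sum.elim u0 (Sum.elim u1 u2) =
      Sum.elim (0 : Fin n0 → ℝ) (Sum.elim u1 ((s - θ) • u2)) := by
  ext (i | i | i) <;> simp [L1mat, mulVec, dotProduct, Fintype.sum_sum_type]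

theorem G3mat_mulVec (u0 : Fin n0 → ℝ) (u1 : Fin n1 → ℝ) (u2 : Fin n2 → ℝ) :
    G3mat n0 n1 n2 *ᵥ Sum.elim u0 (Sum.elim u1 u2) = Sum.elim u1 0 := by
  ext (i | i) <;> simp [G3mat, mulVec, dotProduct, Fintype.sum_sum_type]

theorem L4mat_mulVec (u0 : Fin n0 → ℝ) (u1 : Fin n1 → ℝ) (u2 : Fin n2 → ℝ) :
    L4mat n0 n1 n2 *ᵥ Sum.elim u0 (Sum.elim u1 u2) = Sum.elim (0 : Fin n1 → ℝ) u2 := by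
  ext (i | i) <;> simp [L4mat, mulVec, dotProduct, Fintype.sum_sum_type]

theorem A20fun_mulVec (A2 : ℝ → Matrix (StI n0 n1 n2) (Fin n2) ℝ) (s : ℝ)
    (u0 : Fin n0 → ℝ) (u1 : Fin n1 → ℝ) (u2 : Fin n2 → ℝ) :
    A20fun A2 s *ᵥ Sum.elim u0 (Sum.elim u1 u2) = A2 s *ᵥ u2 := by
  ext i; simp [A20fun, mulVec, dotProduct, Fintype.sum_sum_type]

@[fun_prop]
theorem continuous_Qmat (b : ℝ) : Continuous (Qmat n0 n1 n2 b) := by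
  refine continuous_pi fun r => continuous_pi fun c => ?_
  rcases r with i | i | i | i | i | i <;> rcases c with j | j | j <;>
    simp only [Qmat, of_apply] <;> (try split_ifs) <;> fun_prop

@[fun_prop]
theorem continuous_L1mat (s : ℝ) : Continuous (L1mat n0 n1 n2 s) := by
  refine continuous_pi fun r => continuous_pi fun c => ?_
  rcases r with i | i | i <;> rcases c with j | j | j <;>
    simp only [L1mat, of_apply] <;> (try split_ifs) <;> fun_prop

end Blocks

theorem Matrix.inv_mul_mulVec_sub_of_mulVec_eq_zero {m n R : Type*} [Fintype m]
    [DecidableEq m] [Fintype n] [CommRing R] {B : Matrix m n R} {T : Matrix n m R}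
    (hBT : IsUnit (B * T)) {w : n → R} (hw : B *ᵥ w = 0) (u : m → R) :
    ((B * T)⁻¹ * B) *ᵥ (T *ᵥ u - w) = u := by
  rw [← mulVec_mulVec, mulVec_sub, hw, sub_zero, mulVec_mulVec, mulVec_mulVec, Matrix.mul_assoc,
    nonsing_inv_mul _ ((isUnit_iff_isUnit_det _).mp hBT), one_mulVec]

theorem PIop_add_kernel_eq {ι κ : Type*} [Fintype ι] [Fintype κ] {a b s : ℝ}
    (M0 : ℝ → Matrix κ ι ℝ) (L G : ℝ → ℝ → Matrix κ ι ℝ) {x : ℝ → ι → ℝ}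
    (hL : IntervalIntegrable (fun θ => L s θ *ᵥ x θ) volume a s)
    (hGl : IntervalIntegrable (fun θ => G s θ *ᵥ x θ) volume a s)
    (hGr : IntervalIntegrable (fun θ => G s θ *ᵥ x θ) volume s b) :
    PIop a b M0 (fun s θ => L s θ + G s θ) G x s =
      M0 s *ᵥ x s + (∫ θ in a..s, L s θ *ᵥ x θ) + ∫ θ in a..b, G s θ *ᵥ x θ := by
  simp only [PIop, add_mulVec]
  rw [intervalIntegral.integral_add hL hGl,
    ← intervalIntegral.integral_add_adjacent_intervals hGl hGr]
  abel

theorem PIop_mul_add_mul_add {ι κ κ' ρ : Type*} [Fintype ι] [Fintype κ] [Fintype κ']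
    [Fintype ρ] {a b s : ℝ} (A : ℝ → Matrix ρ κ ℝ) (C : ℝ → Matrix ρ κ' ℝ)
    (D : ℝ → Matrix ρ ι ℝ) (N0 : ℝ → Matrix κ ι ℝ) (N1 N2 : ℝ → ℝ → Matrix κ ι ℝ)
    (P0 : ℝ → Matrix κ' ι ℝ) (P1 P2 : ℝ → ℝ → Matrix κ' ι ℝ) {x : ℝ → ι → ℝ}
    (hN1 : IntervalIntegrable (fun θ => N1 s θ *ᵥ x θ) volume a s)
    (hN2 : IntervalIntegrable (fun θ => N2 s θ *ᵥ x θ) volume s b)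
    (hP1 : IntervalIntegrable (fun θ => P1 s θ *ᵥ x θ) volume a s)
    (hP2 : IntervalIntegrable (fun θ => P2 s θ *ᵥ x θ) volume s b) :
    PIop a b (fun s => A s * N0 s + C s * P0 s + D s)
        (fun s θ => A s * N1 s θ + C s * P1 s θ) (fun s θ => A s * N2 s θ + C s * P2 s θ) x s =
      A s *ᵥ PIop a b N0 N1 N2 x s + C s *ᵥ PIop a b P0 P1 P2 x s + D s *ᵥ x s := by
  simp only [PIop, add_mulVec, ← mulVec_mulVec, mulVec_add]
  rw [intervalIntegral.integral_add (hN1.continuousOn_mulVec continuousOn_const)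
      (hP1.continuousOn_mulVec continuousOn_const),
    intervalIntegral.integral_add (hN2.continuousOn_mulVec continuousOn_const)
      (hP2.continuousOn_mulVec continuousOn_const),
    mulVec_intervalIntegral _ hN1, mulVec_intervalIntegral _ hN2,
    mulVec_intervalIntegral _ hP1, mulVec_intervalIntegral _ hP2]
  abel

section Continuity

variable {n0 n1 n2 : ℕ} {a b : ℝ} {B : Matrix (BcI n1 n2) (BfI n1 n2) ℝ} (s : ℝ)

theorem continuous_G2fun : Continuous (G2fun n0 n1 n2 a b B s) := by
  unfold G2fun; fun_prop

theorem continuous_G1fun : Continuous (G1fun n0 n1 n2 a b B s) :=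
  (continuous_L1mat s).add (continuous_G2fun s)

theorem continuous_G5fun : Continuous (G5fun n0 n1 n2 a b B s) := by
  unfold G5fun; fun_prop

theorem continuous_G4fun : Continuous (G4fun n0 n1 n2 a b B s) :=
  continuous_const.add (continuous_G5fun s)

end Continuity

section Sobolev

variable {a b s c d : ℝ} {n : ℕ} {x x' x'' : ℝ → Fin n → ℝ}

theorem IsH1.integrableOn (h : IsH1 a b x x') : IntegrableOn x' (Icc a b) :=
  h.1.integrable one_le_two

theorem IsH1.intervalIntegrable (h : IsH1 a b x x') (hc : c ∈ Icc a b) (hd : d ∈ Icc a b) :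
    IntervalIntegrable x' volume c d :=
  (h.integrableOn.mono_set (uIcc_subset_Icc hc hd)).intervalIntegrable

theorem IsH1.integral_apply (h : IsH1 a b x x') (hs : s ∈ Icc a b) (i : Fin n) :
    ∫ θ in a..s, x' θ i = x s i - x a i := by
  have ha : a ∈ Icc a b := ⟨le_rfl, hs.1.trans hs.2⟩
  rw [← intervalIntegral_apply (h.intervalIntegrable ha hs), h.2 s hs]
  simp

theorem IsH2.integral_sub_mul_apply (h : IsH2 a b x x' x'') (hs : s ∈ Icc a b) (i : Fin n) :
    ∫ θ in a..s, (s - θ) * x'' θ i = x s i - x a i - (s - a) * x' a i := by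
  have ha : a ∈ Icc a b := ⟨le_rfl, hs.1.trans hs.2⟩
  have hsub : Icc a s ⊆ Icc a b := Icc_subset_Icc_right hs.2
  have htaylor := integral_sub_smul_eq_of_integral_eq hs.1 (h.1 s hs)
    (fun t ht => h.2.2 t (hsub ht)) (h.2.integrableOn.mono_set hsub)
  have hint : IntervalIntegrable (fun θ => (s - θ) • x'' θ) volume a s :=
    (h.2.intervalIntegrable ha hs).continuousOn_smul (by fun_prop)
  simpa [intervalIntegral_apply hint] using congrFun htaylor i

end Sobolev

def bcvec {n1 n2 : ℕ} (x1 : ℝ → Fin n1 → ℝ) (x2 x2' : ℝ → Fin n2 → ℝ) (a : ℝ) :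
    BcI n1 n2 → ℝ :=
  Sum.elim (x1 a) (Sum.elim (x2 a) (x2' a))

namespace InX

variable {a b s c d : ℝ} {n0 n1 n2 : ℕ} {B : Matrix (BcI n1 n2) (BfI n1 n2) ℝ}
  {x0 : ℝ → Fin n0 → ℝ} {x1 x1' : ℝ → Fin n1 → ℝ} {x2 x2' x2'' : ℝ → Fin n2 → ℝ}

theorem intervalIntegrable_mulVec {κ : Type*} [Fintype κ]
    (hX : InX a b B x0 x1 x1' x2 x2' x2'') {M : ℝ → Matrix κ (StI n0 n1 n2) ℝ}
    (hM : Continuous M) (hc : c ∈ Icc a b) (hd : d ∈ Icc a b) :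
    IntervalIntegrable (fun θ => M θ *ᵥ stack3 x0 x1' x2'' θ) volume c d := by
  obtain ⟨hx0, h1, h2, -⟩ := hX
  have hx : IntegrableOn (stack3 x0 x1' x2'') (Icc a b) := by
    refine Integrable.of_eval fun r => ?_
    rcases r with i | i | i
    exacts [(hx0.integrable one_le_two).eval i, h1.integrableOn.eval i,
      h2.2.integrableOn.eval i]
  exact (hx.mono_set (uIcc_subset_Icc hc hd)).intervalIntegrable.continuousOn_mulVec
    hM.continuousOn

theorem integral_Qmat_mulVec (hX : InX a b B x0 x1 x1' x2 x2' x2'') (hab : a ≤ b) :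
    ∫ θ in a..b, Qmat n0 n1 n2 b θ *ᵥ stack3 x0 x1' x2'' θ =
      bfvec x1 x2 x2' a b - Tmat n1 n2 a b *ᵥ bcvec x1 x2 x2' a := by
  have ha : a ∈ Icc a b := left_mem_Icc.2 hab
  have hb : b ∈ Icc a b := right_mem_Icc.2 hab
  have hQ := hX.intervalIntegrable_mulVec (continuous_Qmat b) ha hb
  obtain ⟨-, h1, h2, -⟩ := hX
  ext r
  rw [intervalIntegral_apply hQ]
  rcases r with i | i | i | i | i | i <;>
    simp [stack3, Qmat_mulVec, bfvec, bcvec, Tmat_mulVec, h1.integral_apply hb,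
      h2.2.integral_apply hb, h2.integral_sub_mul_apply hb, sub_sub]

theorem integral_boundary_kernel_mulVec {ρ : Type*} [Fintype ρ]
    (hX : InX a b B x0 x1 x1' x2 x2' x2'') (hBT : IsUnit (B * Tmat n1 n2 a b)) (hab : a ≤ b)
    (W : Matrix ρ (BcI n1 n2) ℝ) :
    ∫ θ in a..b, -(W * ((B * Tmat n1 n2 a b)⁻¹ * (B * Qmat n0 n1 n2 b θ))) *ᵥ
        stack3 x0 x1' x2'' θ = W *ᵥ bcvec x1 x2 x2' a := by
  have hQ := hX.intervalIntegrable_mulVec (continuous_Qmat b) (left_mem_Icc.2 hab)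
    (right_mem_Icc.2 hab)
  calc _ = -((W * ((B * Tmat n1 n2 a b)⁻¹ * B)) *ᵥ
          ∫ θ in a..b, Qmat n0 n1 n2 b θ *ᵥ stack3 x0 x1' x2'' θ) := by
        simp only [mulVec_intervalIntegral _ hQ, ← intervalIntegral.integral_neg, neg_mulVec,
          mulVec_mulVec, Matrix.mul_assoc]
    _ = W *ᵥ bcvec x1 x2 x2' a := by
        rw [hX.integral_Qmat_mulVec hab, ← mulVec_neg, neg_sub, ← mulVec_mulVec,
          inv_mul_mulVec_sub_of_mulVec_eq_zero hBT hX.2.2.2]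

theorem Tcal_stack3 (hX : InX a b B x0 x1 x1' x2 x2' x2'') (hBT : IsUnit (B * Tmat n1 n2 a b))
    (hs : s ∈ Icc a b) :
    Tcal n0 n1 n2 a b B (stack3 x0 x1' x2'') s = stack3 x0 x1 x2 s := by
  have ha : a ∈ Icc a b := ⟨le_rfl, hs.1.trans hs.2⟩
  have hb : b ∈ Icc a b := ⟨hs.1.trans hs.2, le_rfl⟩
  have hL := hX.intervalIntegrable_mulVec (continuous_L1mat s) ha hs
  refine (PIop_add_kernel_eq (fun _ => G0mat n0 n1 n2) (L1mat n0 n1 n2) (G2fun n0 n1 n2 a b B)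
    hL (hX.intervalIntegrable_mulVec (continuous_G2fun s) ha hs)
    (hX.intervalIntegrable_mulVec (continuous_G2fun s) hs hb)).trans ?_
  rw [show ∫ θ in a..b, G2fun n0 n1 n2 a b B s θ *ᵥ stack3 x0 x1' x2'' θ =
    Kmat n0 n1 n2 a s *ᵥ bcvec x1 x2 x2' a from
    hX.integral_boundary_kernel_mulVec hBT (hs.1.trans hs.2) _]
  obtain ⟨-, h1, h2, -⟩ := hX
  ext r
  rw [Pi.add_apply, Pi.add_apply, intervalIntegral_apply hL]
  rcases r with i | i | i <;>
    simp [stack3, G0mat_mulVec, L1mat_mulVec, Kmat_mulVec, bcvec, h1.integral_apply hs,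
      h2.integral_sub_mul_apply hs]

theorem Hcal_stack3 (hX : InX a b B x0 x1 x1' x2 x2' x2'') (hBT : IsUnit (B * Tmat n1 n2 a b))
    (hs : s ∈ Icc a b) :
    Hcal n0 n1 n2 a b B (stack3 x0 x1' x2'') s = Sum.elim (x1' s) (x2' s) := by
  have ha : a ∈ Icc a b := ⟨le_rfl, hs.1.trans hs.2⟩
  have hb : b ∈ Icc a b := ⟨hs.1.trans hs.2, le_rfl⟩
  have hL := hX.intervalIntegrable_mulVec (continuous_const (y := L4mat n0 n1 n2)) ha hs
  refine (PIop_add_kernel_eq (fun _ => G3mat n0 n1 n2) (fun _ _ => L4mat n0 n1 n2)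
    (G5fun n0 n1 n2 a b B) hL (hX.intervalIntegrable_mulVec (continuous_G5fun s) ha hs)
    (hX.intervalIntegrable_mulVec (continuous_G5fun s) hs hb)).trans ?_
  rw [show ∫ θ in a..b, G5fun n0 n1 n2 a b B s θ *ᵥ stack3 x0 x1' x2'' θ =
    Vmat n1 n2 *ᵥ bcvec x1 x2 x2' a from
    hX.integral_boundary_kernel_mulVec hBT (hs.1.trans hs.2) _]
  obtain ⟨-, -, h2, -⟩ := hX
  ext r
  rw [Pi.add_apply, Pi.add_apply, intervalIntegral_apply hL]
  rcases r with i | i <;>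
    simp [stack3, G3mat_mulVec, L4mat_mulVec, Vmat_mulVec, bcvec, h2.2.integral_apply hs]

theorem Acal_stack3 (hX : InX a b B x0 x1 x1' x2 x2' x2'') (hs : s ∈ Icc a b)
    (A0 : ℝ → Matrix (StI n0 n1 n2) (StI n0 n1 n2) ℝ)
    (A1 : ℝ → Matrix (StI n0 n1 n2) (D1I n1 n2) ℝ)
    (A2 : ℝ → Matrix (StI n0 n1 n2) (Fin n2) ℝ) :
    Acal n0 n1 n2 a b B A0 A1 A2 (stack3 x0 x1' x2'') s =
      A0 s *ᵥ Tcal n0 n1 n2 a b B (stack3 x0 x1' x2'') s +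
        A1 s *ᵥ Hcal n0 n1 n2 a b B (stack3 x0 x1' x2'') s + A2 s *ᵥ x2'' s := by
  have ha : a ∈ Icc a b := ⟨le_rfl, hs.1.trans hs.2⟩
  have hb : b ∈ Icc a b := ⟨hs.1.trans hs.2, le_rfl⟩
  rw [← A20fun_mulVec A2 s (x0 s) (x1' s) (x2'' s)]
  exact PIop_mul_add_mul_add A0 A1 (A20fun A2) _ _ _ _ _ _
    (hX.intervalIntegrable_mulVec (continuous_G1fun s) ha hs)
    (hX.intervalIntegrable_mulVec (continuous_G2fun s) hs hb)
    (hX.intervalIntegrable_mulVec (continuous_G4fun s) ha hs)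
    (hX.intervalIntegrable_mulVec (continuous_G5fun s) hs hb)

end InX

theorem stmt12_general (a b : ℝ) (n0 n1 n2 : ℕ)
    (B : Matrix (BcI n1 n2) (BfI n1 n2) ℝ)
    (hBT : IsUnit (B * Tmat n1 n2 a b))
    (A0 : ℝ → Matrix (StI n0 n1 n2) (StI n0 n1 n2) ℝ)
    (A1 : ℝ → Matrix (StI n0 n1 n2) (D1I n1 n2) ℝ)
    (A2 : ℝ → Matrix (StI n0 n1 n2) (Fin n2) ℝ)
    (x0 : ℝ → Fin n0 → ℝ) (x1 x1' : ℝ → Fin n1 → ℝ) (x2 x2' x2'' : ℝ → Fin n2 → ℝ)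
    (hX : InX a b B x0 x1 x1' x2 x2' x2'') :
    ∀ᵐ s ∂(volume.restrict (Icc a b)),
      (A0 s).mulVec (stack3 x0 x1 x2 s) + (A1 s).mulVec (Sum.elim (x1' s) (x2' s)) +
          (A2 s).mulVec (x2'' s) =
        Acal n0 n1 n2 a b B A0 A1 A2 (stack3 x0 x1' x2'') s := by
  filter_upwards [ae_restrict_mem measurableSet_Icc] with s hs
  rw [hX.Acal_stack3 hs, hX.Tcal_stack3 hBT hs, hX.Hcal_stack3 hBT hs]

/-- for x ∈ X with fundamental state x̂, the PDE generator
A0 x + A1 (x1',x2') + A2 x2'' applied to x coincides with the 3-PI operator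
𝒜 = P_{H0,H1,H2} applied to x̂. -/
theorem stmt12 (a b : ℝ) (hab : a < b) (n0 n1 n2 : ℕ)
    (B : Matrix (BcI n1 n2) (BfI n1 n2) ℝ)
    (hBT : IsUnit (B * Tmat n1 n2 a b))
    (A0 : ℝ → Matrix (StI n0 n1 n2) (StI n0 n1 n2) ℝ)
    (A1 : ℝ → Matrix (StI n0 n1 n2) (D1I n1 n2) ℝ)
    (A2 : ℝ → Matrix (StI n0 n1 n2) (Fin n2) ℝ)
    (hA0m : ∀ i j, Measurable fun s => A0 s i j)
    (hA1m : ∀ i j, Measurable fun s => A1 s i j)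
    (hA2m : ∀ i j, Measurable fun s => A2 s i j)
    (M : ℝ)
    (hA0b : ∀ s ∈ Icc a b, ∀ i j, |A0 s i j| ≤ M)
    (hA1b : ∀ s ∈ Icc a b, ∀ i j, |A1 s i j| ≤ M)
    (hA2b : ∀ s ∈ Icc a b, ∀ i j, |A2 s i j| ≤ M)
    (x0 : ℝ → Fin n0 → ℝ) (x1 x1' : ℝ → Fin n1 → ℝ) (x2 x2' x2'' : ℝ → Fin n2 → ℝ)
    (hX : InX a b B x0 x1 x1' x2 x2' x2'') :
    ∀ᵐ s ∂(volume.restrict (Icc a b)),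
      (A0 s).mulVec (stack3 x0 x1 x2 s) + (A1 s).mulVec (Sum.elim (x1' s) (x2' s)) +
          (A2 s).mulVec (x2'' s) =
        Acal n0 n1 n2 a b B A0 A1 A2 (stack3 x0 x1' x2'') s :=
  stmt12_general a b n0 n1 n2 B hBT A0 A1 A2 x0 x1 x1' x2 x2' x2'' hX

end
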